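/- arXiv:1508.07636 — 10 statements merged into one kernel-verified Lean document; each statement's English description precedes it below -/
import Mathlib

section
/- Let X be a finite set and T : X → ℝ a statistic that is a UMVUE (characterized by: for every H : X → ℝ with ∑_x H(x) P θ x = 0 for all θ, also ∑_x T(x) H(x) P θ x = 0 for all θ). Then T is complete: for any u : ℝ → ℝ with ∑_x u(T(x)) P θ x = 0 for all θ, one has u(T(x)) P θ x = 0 for all θ and x (i.e., u ∘ T vanishes off the null set). -/
/-!
Completeness from the covariance characterization. Iterating the UMVUE property, `T ^ n · H`
is again an unbiased estimator of zero whenever `H` is, so every polynomial in `T` is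
uncorrelated with `u ∘ T`. On the finite range of `T` the function `u` is a polynomial
(Lagrange interpolation), hence `E_θ[(u ∘ T)²] = 0` and `u ∘ T` vanishes wherever `P θ` does not.
-/

open Finset Polynomial

/-- Rao's covariance characterization of a UMVUE: `T` is uncorrelated with every unbiased
estimator of zero. -/
def IsUMVUE {X Θ : Type*} [Fintype X] (P : Θ → X → ℝ) (T : X → ℝ) : Prop :=
  ∀ H : X → ℝ, (∀ θ, ∑ x, H x * P θ x = 0) → ∀ θ, ∑ x, T x * H x * P θ x = 0

section

variable {X : Type*} [Fintype X]

theorem sum_eval_mul_eq_zero_of_forall_sum_pow_mul_eq_zero {T H w : X → ℝ}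
    (h : ∀ n : ℕ, ∑ x, T x ^ n * H x * w x = 0) (p : ℝ[X]) :
    ∑ x, p.eval (T x) * H x * w x = 0 := by
  induction p using Polynomial.induction_on' with
  | add p q hp hq => simp only [eval_add, add_mul, sum_add_distrib, hp, hq, add_zero]
  | monomial n a =>
    rw [← mul_zero a, ← h n, mul_sum]
    exact sum_congr rfl fun x _ => by rw [eval_monomial]; ring

theorem exists_polynomial_eval_eq_on_range {F : Type*} [Field F] [DecidableEq F]
    (T : X → F) (u : F → F) : ∃ p : F[X], ∀ x, p.eval (T x) = u (T x) :=
  ⟨Lagrange.interpolate (univ.image T) id u, fun x =>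
    Lagrange.eval_interpolate_at_node u Function.injective_id.injOn (mem_image_of_mem T (mem_univ x))⟩

end

namespace IsUMVUE

variable {X Θ : Type*} [Fintype X] {P : Θ → X → ℝ} {T H : X → ℝ}

theorem sum_pow_mul_eq_zero (hT : IsUMVUE P T) (hH : ∀ θ, ∑ x, H x * P θ x = 0) (n : ℕ) :
    ∀ θ, ∑ x, T x ^ n * H x * P θ x = 0 := by
  induction n with
  | zero => simpa using hH
  | succ n ih =>
    intro θ
    rw [← hT (fun x => T x ^ n * H x) ih θ]
    exact sum_congr rfl fun x _ => by ring

theorem sum_eval_mul_eq_zero (hT : IsUMVUE P T) (hH : ∀ θ, ∑ x, H x * P θ x = 0) (p : ℝ[X])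
    (θ : Θ) : ∑ x, p.eval (T x) * H x * P θ x = 0 :=
  sum_eval_mul_eq_zero_of_forall_sum_pow_mul_eq_zero (fun n => hT.sum_pow_mul_eq_zero hH n θ) p

end IsUMVUE

theorem umvue_complete_general
    {X Θ : Type*} [Fintype X]
    (P : Θ → X → ℝ)
    (hP0 : ∀ θ x, 0 ≤ P θ x)
    (T : X → ℝ)
    (hT : ∀ H : X → ℝ, (∀ θ, ∑ x, H x * P θ x = 0) →
        ∀ θ, ∑ x, T x * H x * P θ x = 0) :
    ∀ u : ℝ → ℝ, (∀ θ, ∑ x, u (T x) * P θ x = 0) →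
      ∀ θ x, u (T x) * P θ x = 0 := by
  intro u hu θ x
  obtain ⟨p, hp⟩ := exists_polynomial_eval_eq_on_range T u
  have hsq : ∑ y, u (T y) ^ 2 * P θ y = 0 := by
    simpa only [hp, sq] using IsUMVUE.sum_eval_mul_eq_zero hT hu p θ
  have hx := (sum_eq_zero_iff_of_nonneg fun y _ => mul_nonneg (sq_nonneg _) (hP0 θ y)).mp hsq x
    (mem_univ x)
  simpa using hx

/-- Any UMVUE (covariance characterization) on a finite sample space is complete. -/
theorem umvue_complete
    {X Θ : Type*} [Fintype X]
    (P : Θ → X → ℝ)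
    (hP0 : ∀ θ x, 0 ≤ P θ x)
    (hP1 : ∀ θ, ∑ x, P θ x = 1)
    (T : X → ℝ)
    (hT : ∀ H : X → ℝ, (∀ θ, ∑ x, H x * P θ x = 0) →
        ∀ θ, ∑ x, T x * H x * P θ x = 0) :
    ∀ u : ℝ → ℝ, (∀ θ, ∑ x, u (T x) * P θ x = 0) →
      ∀ θ x, u (T x) * P θ x = 0 :=
  umvue_complete_general P hP0 T hT
end

section
/- Let X be a finite set and T : X → ℝ a UMVUE in the covariance-characterization sense. Then for every function u : ℝ → ℝ and every H : X → ℝ with E_θ H = 0 for all θ, one has E_θ ((u ∘ T) · H) = 0 for all θ. -/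
/-!
If the zero-mean estimators are closed under multiplication by `T`, they are closed under
multiplication by every polynomial in `T`. On the finite set `T(X)` every function `u` agrees with
its Lagrange interpolation polynomial, so `(u ∘ T) · H` is again a zero-mean estimator.
-/

open Polynomial

section ClosedUnderMul

variable {X R : Type*} [CommSemiring R] (V : Submodule R (X → R)) {T : X → R}

theorem pow_mul_mem_of_mul_mem (hT : ∀ H ∈ V, T * H ∈ V) (n : ℕ) {H : X → R} (hH : H ∈ V) :
    T ^ n * H ∈ V := by
  induction n with
  | zero => simpa using hH
  | succ n ih => simpa [pow_succ', mul_assoc] using hT _ ih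

theorem eval_comp_mul_mem_of_mul_mem (hT : ∀ H ∈ V, T * H ∈ V) (p : R[X]) {H : X → R}
    (hH : H ∈ V) : (fun x => p.eval (T x)) * H ∈ V := by
  induction p using Polynomial.induction_on' with
  | add p q hp hq =>
    convert V.add_mem hp hq using 1
    ext x
    simp [add_mul]
  | monomial n c =>
    have hmonomial : (fun x => (monomial n c).eval (T x)) * H = c • (T ^ n * H) := by
      ext x
      simp [mul_assoc]
    rw [hmonomial]
    exact V.smul_mem c (pow_mul_mem_of_mul_mem V hT n hH)

end ClosedUnderMul

theorem exists_eval_eq_on_range {X K : Type*} [Finite X] [Field K] (T : X → K) (u : K → K) :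
    ∃ p : K[X], ∀ x, p.eval (T x) = u (T x) := by
  classical
  have := Fintype.ofFinite X
  refine ⟨Lagrange.interpolate (Finset.univ.image T) id u, fun x => ?_⟩
  simpa using Lagrange.eval_interpolate_at_node u (Set.injOn_id _)
    (Finset.mem_image_of_mem T (Finset.mem_univ x))

theorem comp_mul_mem_of_mul_mem {X K : Type*} [Finite X] [Field K] (V : Submodule K (X → K))
    {T : X → K} (hT : ∀ H ∈ V, T * H ∈ V) (u : K → K) {H : X → K} (hH : H ∈ V) :
    (u ∘ T) * H ∈ V := by
  obtain ⟨p, hp⟩ := exists_eval_eq_on_range T u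
  have hcomp : u ∘ T = fun x => p.eval (T x) := funext fun x => (hp x).symm
  rw [hcomp]
  exact eval_comp_mul_mem_of_mul_mem V hT p hH

/-- `E₀`, the unbiased estimators of zero. -/
def zeroMeanEstimators {X Θ R : Type*} [Fintype X] [CommSemiring R] (P : Θ → X → R) :
    Submodule R (X → R) where
  carrier := {H | ∀ θ, ∑ x, H x * P θ x = 0}
  add_mem' hH hG θ := by simp [add_mul, Finset.sum_add_distrib, hH θ, hG θ]
  zero_mem' θ := by simp
  smul_mem' c H hH θ := by simp [mul_assoc, ← Finset.mul_sum, hH θ]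

theorem umvue_comp_mem_E0_general
    {X Θ : Type*} [Fintype X]
    (P : Θ → X → ℝ)
    (T : X → ℝ)
    (hT : ∀ H : X → ℝ, (∀ θ, ∑ x, H x * P θ x = 0) →
        ∀ θ, ∑ x, T x * H x * P θ x = 0) :
    ∀ (u : ℝ → ℝ) (H : X → ℝ), (∀ θ, ∑ x, H x * P θ x = 0) →
      ∀ θ, ∑ x, u (T x) * H x * P θ x = 0 :=
  fun u _ hH => comp_mul_mem_of_mul_mem (zeroMeanEstimators P) hT u hH

/-- If `T` is a UMVUE (covariance characterization), then for every `u : ℝ → ℝ`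
and every unbiased estimator `H` of zero, `E_θ ((u ∘ T) · H) = 0` for all `θ`. -/
theorem umvue_comp_mem_E0
    {X Θ : Type*} [Fintype X]
    (P : Θ → X → ℝ)
    (hP0 : ∀ θ x, 0 ≤ P θ x)
    (hP1 : ∀ θ, ∑ x, P θ x = 1)
    (T : X → ℝ)
    (hT : ∀ H : X → ℝ, (∀ θ, ∑ x, H x * P θ x = 0) →
        ∀ θ, ∑ x, T x * H x * P θ x = 0) :
    ∀ (u : ℝ → ℝ) (H : X → ℝ), (∀ θ, ∑ x, H x * P θ x = 0) →
      ∀ θ, ∑ x, u (T x) * H x * P θ x = 0 :=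
  umvue_comp_mem_E0_general P T hT
end

section
/- Let X be a finite set, Θ a set, and P : Θ → X → ℝ a family of probability mass functions. Suppose T : X → ℝ is a UMVUE (in the covariance-characterization sense: E_θ(TH)=0 for all θ whenever E_θ H = 0 for all θ). Then for every convex function λ : ℝ → ℝ and every statistic S with E_θ S = E_θ T for all θ, one has E_θ (λ ∘ T) ≤ E_θ (λ ∘ S) for all θ. That is, every UMVUE is a universally uniformly best unbiased estimator. -/
/-- Every UMVUE (covariance characterization) is a universally uniformly best
unbiased estimator: for every convex loss `l` and every `S` with the same
expectation function, `E_θ (l ∘ T) ≤ E_θ (l ∘ S)` for all `θ`. -/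
theorem umvue_is_uubue
    {X Θ : Type*} [Fintype X]
    (P : Θ → X → ℝ)
    (hP0 : ∀ θ x, 0 ≤ P θ x)
    (hP1 : ∀ θ, ∑ x, P θ x = 1)
    (T : X → ℝ)
    (hT : ∀ H : X → ℝ, (∀ θ, ∑ x, H x * P θ x = 0) →
        ∀ θ, ∑ x, T x * H x * P θ x = 0)
    (l : ℝ → ℝ) (hl : ConvexOn ℝ Set.univ l)
    (S : X → ℝ) (hS : ∀ θ, ∑ x, S x * P θ x = ∑ x, T x * P θ x) :
    ∀ θ, ∑ x, l (T x) * P θ x ≤ ∑ x, l (S x) * P θ x := by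
  -- Step 1: all moments of (S - T) against powers of T vanish
  have hmom : ∀ n : ℕ, ∀ θ, ∑ x, (T x) ^ n * ((S x - T x) * P θ x) = 0 := by
    intro n
    induction n with
    | zero =>
      intro θ
      simp only [pow_zero, one_mul, sub_mul]
      rw [Finset.sum_sub_distrib, hS θ, sub_self]
    | succ n ih =>
      intro θ
      have h := hT (fun x => (T x) ^ n * (S x - T x))
        (fun θ' => by simpa [mul_assoc] using ih θ') θ
      calc ∑ x, (T x) ^ (n+1) * ((S x - T x) * P θ x)
          = ∑ x, T x * ((T x) ^ n * (S x - T x)) * P θ x := by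
            apply Finset.sum_congr rfl; intro x _; ring
        _ = 0 := h
  -- Step 2: polynomials in T
  have hpoly : ∀ (p : Polynomial ℝ) θ, ∑ x, p.eval (T x) * ((S x - T x) * P θ x) = 0 := by
    intro p θ
    simp_rw [Polynomial.eval_eq_sum_range, Finset.sum_mul]
    rw [Finset.sum_comm]
    apply Finset.sum_eq_zero
    intro i _
    simp_rw [mul_assoc, ← Finset.mul_sum]
    rw [hmom i θ, mul_zero]
  -- Step 3: fiberwise vanishing
  have hfib : ∀ θ t, ∑ x ∈ Finset.univ.filter (fun x => T x = t),
      (S x - T x) * P θ x = 0 := by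
    intro θ t
    by_cases ht : t ∈ Finset.univ.image T
    · have hinj : Set.InjOn (id : ℝ → ℝ) (Finset.univ.image T) := fun a _ b _ h => h
      have h := hpoly (Lagrange.basis (Finset.univ.image T) id t) θ
      rw [← h]
      rw [Finset.sum_filter]
      apply Finset.sum_congr rfl
      intro x _
      by_cases hx : T x = t
      · rw [if_pos hx, hx]
        have := Lagrange.eval_basis_self hinj ht
        simp only [id] at this
        rw [this, one_mul]
      · rw [if_neg hx]
        have hmem : T x ∈ Finset.univ.image T := Finset.mem_image_of_mem T (Finset.mem_univ x)
        have := Lagrange.eval_basis_of_ne (v := id) (Ne.symm hx) hmem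
        simp only [id] at this
        rw [this, zero_mul]
    · have : Finset.univ.filter (fun x => T x = t) = ∅ := by
        rw [Finset.filter_eq_empty_iff]
        intro x _ hx
        exact ht (hx ▸ Finset.mem_image_of_mem T (Finset.mem_univ x))
      rw [this, Finset.sum_empty]
  -- Step 4: Jensen fiberwise
  intro θ
  have hpart : ∀ f : X → ℝ, ∑ x, f x =
      ∑ t ∈ Finset.univ.image T, ∑ x ∈ Finset.univ.filter (fun x => T x = t), f x := by
    intro f
    rw [Finset.sum_fiberwise_of_maps_to (fun x _ => Finset.mem_image_of_mem T (Finset.mem_univ x))]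
  rw [hpart (fun x => l (T x) * P θ x), hpart (fun x => l (S x) * P θ x)]
  apply Finset.sum_le_sum
  intro t ht
  set A := Finset.univ.filter (fun x => T x = t) with hA
  have hTA : ∀ x ∈ A, T x = t := fun x hx => (Finset.mem_filter.mp hx).2
  set w := ∑ x ∈ A, P θ x with hw
  have hw0 : 0 ≤ w := Finset.sum_nonneg fun x _ => hP0 θ x
  rcases eq_or_lt_of_le hw0 with hw0' | hwpos
  · -- all P zero on A
    have hz : ∀ x ∈ A, P θ x = 0 := by
      intro x hx
      exact (Finset.sum_eq_zero_iff_of_nonneg (fun x _ => hP0 θ x)).mp hw0'.symm x hx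
    have e1 : ∑ x ∈ A, l (T x) * P θ x = 0 :=
      Finset.sum_eq_zero fun x hx => by rw [hz x hx, mul_zero]
    have e2 : ∑ x ∈ A, l (S x) * P θ x = 0 :=
      Finset.sum_eq_zero fun x hx => by rw [hz x hx, mul_zero]
    rw [e1, e2]
  · -- Jensen with weights P/w
    have hSP : ∑ x ∈ A, S x * P θ x = t * w := by
      have h1 := hfib θ t
      have heq : (∑ x ∈ A, S x * P θ x) - ∑ x ∈ A, T x * P θ x = 0 := by
        rw [← Finset.sum_sub_distrib, ← h1]
        apply Finset.sum_congr rfl; intro x _; ring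
      have : ∑ x ∈ A, S x * P θ x = ∑ x ∈ A, T x * P θ x := sub_eq_zero.mp heq
      rw [this, hw, Finset.mul_sum]
      apply Finset.sum_congr rfl
      intro x hx
      rw [hTA x hx]
    have hmean : ∑ x ∈ A, (P θ x / w) • S x = t := by
      simp_rw [smul_eq_mul, div_mul_eq_mul_div]
      rw [← Finset.sum_div]
      rw [Finset.sum_congr rfl (fun x _ => mul_comm (P θ x) (S x)), hSP,
        mul_div_assoc, div_self (ne_of_gt hwpos), mul_one]
    have hjensen := hl.map_sum_le (t := A) (w := fun x => P θ x / w) (p := S)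
      (fun x _ => div_nonneg (hP0 θ x) hw0)
      (by rw [← Finset.sum_div, ← hw, div_self (ne_of_gt hwpos)])
      (fun x _ => Set.mem_univ _)
    rw [hmean] at hjensen
    have hLHS : ∑ x ∈ A, l (T x) * P θ x = l t * w := by
      rw [hw, Finset.mul_sum]
      apply Finset.sum_congr rfl
      intro x hx
      rw [hTA x hx]
    rw [hLHS]
    calc l t * w ≤ (∑ x ∈ A, (P θ x / w) • l (S x)) * w := by
          exact mul_le_mul_of_nonneg_right hjensen hw0
      _ = ∑ x ∈ A, l (S x) * P θ x := by
          rw [Finset.sum_mul]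
          apply Finset.sum_congr rfl
          intro x _
          rw [smul_eq_mul]
          field_simp
end

section
/- Let X be a finite set, Θ a set, P : Θ → X → ℝ a family of probability mass functions. Suppose λ : ℝ → ℝ is differentiable and strictly convex, and T : X → ℝ satisfies: for every S with E_θ S = E_θ T for all θ, E_θ (λ ∘ T) ≤ E_θ (λ ∘ S) for all θ (T is λ-UBUE). Then for every H with E_θ H = 0 for all θ, one has E_θ ((λ' ∘ T) · H) = 0 for all θ. -/
open Finset

theorem hasDerivAt_sum_comp_add_mul_mul {X : Type*} [Fintype X] {l : ℝ → ℝ} {T : X → ℝ}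
    (hl : ∀ x, DifferentiableAt ℝ l (T x)) (H w : X → ℝ) :
    HasDerivAt (fun ε => ∑ x, l (T x + ε * H x) * w x)
      (∑ x, deriv l (T x) * H x * w x) 0 := by
  refine HasDerivAt.fun_sum fun x _ => ?_
  have hline : HasDerivAt (fun ε : ℝ => T x + ε * H x) (H x) 0 := by
    simpa using ((hasDerivAt_id (0 : ℝ)).mul_const (H x)).const_add (T x)
  have hcomp : HasDerivAt (fun ε => l (T x + ε * H x)) (deriv l (T x) * H x) 0 :=
    (hl x).hasDerivAt.comp_of_eq 0 hline (by simp)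
  exact hcomp.mul_const (w x)

theorem sum_add_mul_mul_eq_of_sum_mul_eq_zero {X : Type*} [Fintype X] (T H w : X → ℝ)
    (hH : ∑ x, H x * w x = 0) (ε : ℝ) :
    ∑ x, (T x + ε * H x) * w x = ∑ x, T x * w x := by
  simp only [add_mul, sum_add_distrib, mul_assoc, ← mul_sum, hH, mul_zero, add_zero]

theorem lubue_first_order_general
    {X Θ : Type*} [Fintype X]
    (P : Θ → X → ℝ)
    (l : ℝ → ℝ) (hdiff : Differentiable ℝ l)
    (T : X → ℝ)
    (hT : ∀ S : X → ℝ, (∀ θ, ∑ x, S x * P θ x = ∑ x, T x * P θ x) →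
        ∀ θ, ∑ x, l (T x) * P θ x ≤ ∑ x, l (S x) * P θ x) :
    ∀ H : X → ℝ, (∀ θ, ∑ x, H x * P θ x = 0) →
      ∀ θ, ∑ x, deriv l (T x) * H x * P θ x = 0 := by
  intro H hH θ
  have hmin : IsLocalMin (fun ε => ∑ x, l (T x + ε * H x) * P θ x) 0 :=
    Filter.Eventually.of_forall fun ε => by
      simpa using hT (fun x => T x + ε * H x)
        (fun θ' => sum_add_mul_mul_eq_of_sum_mul_eq_zero T H (P θ') (hH θ') ε) θ
  exact hmin.hasDerivAt_eq_zero (hasDerivAt_sum_comp_add_mul_mul (fun x => hdiff (T x)) H (P θ))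

/-- First-order optimality condition for a `λ`-UBUE: if `λ` is differentiable and
strictly convex and `T` is best unbiased for the loss `λ`, then
`E_θ ((λ' ∘ T) · H) = 0` for every unbiased estimator `H` of zero and every `θ`. -/
theorem lubue_first_order
    {X Θ : Type*} [Fintype X]
    (P : Θ → X → ℝ)
    (hP0 : ∀ θ x, 0 ≤ P θ x)
    (hP1 : ∀ θ, ∑ x, P θ x = 1)
    (l : ℝ → ℝ) (hdiff : Differentiable ℝ l) (hconv : StrictConvexOn ℝ Set.univ l)
    (T : X → ℝ)
    (hT : ∀ S : X → ℝ, (∀ θ, ∑ x, S x * P θ x = ∑ x, T x * P θ x) →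
        ∀ θ, ∑ x, l (T x) * P θ x ≤ ∑ x, l (S x) * P θ x) :
    ∀ H : X → ℝ, (∀ θ, ∑ x, H x * P θ x = 0) →
      ∀ θ, ∑ x, deriv l (T x) * H x * P θ x = 0 :=
  lubue_first_order_general P l hdiff T hT
end

section
/- Let X be a finite set, Θ a set, P : Θ → X → ℝ a family of probability mass functions, and for x ∈ X let ℓ_x : Θ → ℝ, ℓ_x(θ) := P θ x, be the likelihood function. Suppose T : X → ℝ is such that there exists a linear operator Λ on the span of {ℓ_x : x ∈ X} with Λ ℓ_x = T(x) • ℓ_x for all x ∈ X. Then T is a UMVUE: for every H : X → ℝ with ∑_x H(x) P θ x = 0 for all θ, also ∑_x T(x) H(x) P θ x = 0 for all θ. -/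
/-- If each likelihood function `ℓ_x = (θ ↦ P θ x)` is an eigenvector (with
eigenvalue `T x`) of some linear operator `Λ` on the function space `Θ → ℝ`,
then `T` is a UMVUE (covariance characterization). -/
theorem umvue_of_eigen
    {X Θ : Type*} [Fintype X]
    (P : Θ → X → ℝ)
    (hP0 : ∀ θ x, 0 ≤ P θ x)
    (hP1 : ∀ θ, ∑ x, P θ x = 1)
    (T : X → ℝ)
    (Λ : (Θ → ℝ) →ₗ[ℝ] (Θ → ℝ))
    (hΛ : ∀ x, Λ (fun θ => P θ x) = T x • (fun θ => P θ x)) :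
    ∀ H : X → ℝ, (∀ θ, ∑ x, H x * P θ x = 0) →
      ∀ θ, ∑ x, T x * H x * P θ x = 0 := by
  intro H hH θ
  have hf : (∑ x, H x • (fun θ => P θ x) : Θ → ℝ) = 0 := by
    funext t
    simpa using hH t
  have h2 := congrFun (congrArg Λ hf) θ
  rw [map_sum, map_zero] at h2
  simp only [hΛ, Finset.sum_apply, Pi.smul_apply, smul_eq_mul,
    LinearMap.map_smul, Pi.zero_apply] at h2
  rw [← h2]
  apply Finset.sum_congr rfl
  intro x _
  ring
end

section
/- Let X be a finite set, Θ a finite set, P : Θ → X → ℝ a family of probability mass functions such that the family (P θ ·)_{θ ∈ Θ} of rows is linearly independent. Suppose T : X → ℝ is a UMVUE (covariance characterization). Then there exists a linear map Λ : (Θ → ℝ) → (Θ → ℝ) such that Λ ℓ_x = T(x) • ℓ_x for all x ∈ X, where ℓ_x(θ) = P θ x. -/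
/-- If the rows of `P` are linearly independent and `T` is a UMVUE (covariance
characterization), then there is a linear map `Λ` (the matrix of Lagrange
multipliers) whose eigenvectors are the likelihood functions `ℓ_x`, with
eigenvalues the values `T x`. -/
theorem exists_lagrange_matrix_of_umvue
    {X Θ : Type*} [Fintype X] [Fintype Θ]
    (P : Θ → X → ℝ)
    (hP0 : ∀ θ x, 0 ≤ P θ x)
    (hP1 : ∀ θ, ∑ x, P θ x = 1)
    (hrows : LinearIndependent ℝ (fun θ : Θ => P θ))
    (T : X → ℝ)
    (hT : ∀ H : X → ℝ, (∀ θ, ∑ x, H x * P θ x = 0) →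
        ∀ θ, ∑ x, T x * H x * P θ x = 0) :
    ∃ Λ : (Θ → ℝ) →ₗ[ℝ] (Θ → ℝ),
      ∀ x, Λ (fun θ => P θ x) = T x • (fun θ => P θ x) := by
  classical
  set g : (X → ℝ) →ₗ[ℝ] (Θ → ℝ) :=
    { toFun := fun c θ => ∑ x, c x * P θ x
      map_add' := by
        intro a b; funext θ
        simp [add_mul, Finset.sum_add_distrib]
      map_smul' := by
        intro r a; funext θ
        simp [Finset.mul_sum, mul_assoc] } with hg
  set f : (X → ℝ) →ₗ[ℝ] (Θ → ℝ) :=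
    { toFun := fun c θ => ∑ x, T x * c x * P θ x
      map_add' := by
        intro a b; funext θ
        simp [mul_add, add_mul, Finset.sum_add_distrib]
      map_smul' := by
        intro r a; funext θ
        simp [Finset.mul_sum]; ring_nf
        exact Finset.sum_congr rfl fun x _ => by ring } with hf
  have hker : LinearMap.ker g ≤ LinearMap.ker f := by
    intro c hc
    have hc' : ∀ θ, ∑ x, c x * P θ x = 0 := by
      intro θ
      have := congrFun (LinearMap.mem_ker.mp hc) θ
      simpa [hg] using this
    have := hT c hc'
    ext θ
    simpa [hf] using this θ
  obtain ⟨q, hq⟩ := Submodule.exists_isCompl (LinearMap.range g)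
  let π : (Θ → ℝ) →ₗ[ℝ] ↥(LinearMap.range g) := Submodule.linearProjOfIsCompl _ q hq
  let e := g.quotKerEquivRange
  let ψ : ↥(LinearMap.range g) →ₗ[ℝ] (Θ → ℝ) :=
    ((LinearMap.ker g).liftQ f hker).comp e.symm.toLinearMap
  refine ⟨ψ.comp π, ?_⟩
  intro x
  have hx : (fun θ => P θ x) = g (Pi.single x 1) := by
    funext θ
    simp [hg, Pi.single_apply]
  have hmem : g (Pi.single x 1) ∈ LinearMap.range g := ⟨_, rfl⟩
  have hπ : π (g (Pi.single x 1)) = ⟨g (Pi.single x 1), hmem⟩ :=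
    Submodule.linearProjOfIsCompl_apply_left hq ⟨g (Pi.single x 1), hmem⟩
  have he : e (Submodule.Quotient.mk (Pi.single x 1)) = ⟨g (Pi.single x 1), hmem⟩ :=
    rfl
  have hesymm : e.symm ⟨g (Pi.single x 1), hmem⟩ = Submodule.Quotient.mk (Pi.single x 1) := by
    rw [← he, LinearEquiv.symm_apply_apply]
  have : ψ ⟨g (Pi.single x 1), hmem⟩ = f (Pi.single x 1) := by
    simp only [ψ, LinearMap.comp_apply, LinearEquiv.coe_toLinearMap, hesymm,
      Submodule.liftQ_apply]
  rw [hx]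
  simp only [LinearMap.comp_apply]
  rw [hπ]

  rw [this]
  funext θ
  simp [hf, hg, Pi.single_apply, Finset.mul_sum]
end

section
/- Let X be a finite set, Θ a set, P : Θ → X → ℝ a family of probability mass functions, ℓ_x(θ) := P θ x. A statistic T : X → ℝ is a UMVUE (covariance characterization) if and only if for each t in the range T(X), choosing a basis B_t of the span of {ℓ_x : T(x) = t}, the union ⋃_{t ∈ T(X)} B_t is linearly independent. -/
open Finset

section Aux

variable {X Θ : Type*} [Fintype X] (P : Θ → X → ℝ) (T : X → ℝ)

/-- From the UMVUE covariance property, any polynomial in `T` can be inserted. -/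
private lemma poly_step
    (hU : ∀ H : X → ℝ, (∀ θ, ∑ x, H x * P θ x = 0) →
        ∀ θ, ∑ x, T x * H x * P θ x = 0)
    (H : X → ℝ) (hH : ∀ θ, ∑ x, H x * P θ x = 0) (p : Polynomial ℝ) :
    ∀ θ, ∑ x, (p.eval (T x)) * H x * P θ x = 0 := by
  induction p using Polynomial.induction_on with
  | C a =>
      intro θ
      simp only [Polynomial.eval_C, mul_assoc]
      rw [← Finset.mul_sum]
      rw [hH θ, mul_zero]
  | add p q hp hq =>
      intro θ
      simp only [Polynomial.eval_add, add_mul]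
      rw [Finset.sum_add_distrib, hp θ, hq θ, add_zero]
  | monomial n a hp =>
      intro θ
      have key := hU (fun x => (Polynomial.C a * Polynomial.X ^ n).eval (T x)
        * H x) (fun θ => hp θ) θ
      have : ∀ x, ((Polynomial.C a * Polynomial.X ^ (n + 1)).eval (T x)) * H x * P θ x
          = T x * ((Polynomial.C a * Polynomial.X ^ n).eval (T x) * H x) * P θ x := by
        intro x
        simp only [Polynomial.eval_mul, Polynomial.eval_pow, Polynomial.eval_C,
          Polynomial.eval_X, pow_succ]
        ring
      rw [Finset.sum_congr rfl (fun x _ => this x)]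
      exact key

/-- Fiberwise vanishing from the UMVUE property (via Lagrange interpolation). -/
private lemma fiber_zero [DecidableEq ℝ]
    (hU : ∀ H : X → ℝ, (∀ θ, ∑ x, H x * P θ x = 0) →
        ∀ θ, ∑ x, T x * H x * P θ x = 0)
    (H : X → ℝ) (hH : ∀ θ, ∑ x, H x * P θ x = 0) (t : ℝ) :
    ∀ θ, ∑ x ∈ Finset.univ.filter (fun x => T x = t), H x * P θ x = 0 := by
  intro θ
  by_cases ht : t ∈ Finset.univ.image T
  · have key := poly_step P T hU H hH (Lagrange.basis (Finset.univ.image T) (id : ℝ → ℝ) t) θ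
    have heval : ∀ x : X, (Lagrange.basis (Finset.univ.image T) (id : ℝ → ℝ) t).eval (T x)
        = if T x = t then 1 else 0 := by
      intro x
      by_cases hx : T x = t
      · rw [if_pos hx, hx]
        exact Lagrange.eval_basis_self (Set.injOn_id _) ht
      · rw [if_neg hx]
        have : T x ∈ Finset.univ.image T := Finset.mem_image_of_mem T (Finset.mem_univ x)
        exact Lagrange.eval_basis_of_ne (v := (id : ℝ → ℝ)) (fun h => hx h.symm) this
    rw [Finset.sum_congr rfl (fun x _ => by rw [heval x])] at key
    rw [Finset.sum_filter]
    have heq : ∀ x : X, (if T x = t then H x * P θ x else 0)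
        = (if T x = t then (1:ℝ) else 0) * H x * P θ x := by
      intro x
      by_cases hx : T x = t <;> simp [hx]
    rw [Finset.sum_congr rfl (fun x _ => heq x)]
    exact key
  · have : Finset.univ.filter (fun x => T x = t) = ∅ := by
      apply Finset.filter_false_of_mem
      intro x _ hx
      exact ht (hx ▸ Finset.mem_image_of_mem T (Finset.mem_univ x))
    rw [this, Finset.sum_empty]

end Aux

/-- Main theorem: a statistic `T` on a finite sample space is a UMVUE (covariance
characterization) iff the subspaces `V_t = span {ℓ_x : T x = t}`, for `t` in the
range of `T`, form an independent family (equivalently, the union of bases of the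
`V_t`'s is linearly independent). -/
theorem umvue_iff_independent_spans
    {X Θ : Type*} [Fintype X]
    (P : Θ → X → ℝ)
    (hP0 : ∀ θ x, 0 ≤ P θ x)
    (hP1 : ∀ θ, ∑ x, P θ x = 1)
    (T : X → ℝ) :
    (∀ H : X → ℝ, (∀ θ, ∑ x, H x * P θ x = 0) →
        ∀ θ, ∑ x, T x * H x * P θ x = 0)
      ↔ iSupIndep (fun t : Set.range T =>
          Submodule.span ℝ {l : Θ → ℝ | ∃ x, T x = (t : ℝ) ∧ l = fun θ => P θ x}) := by
  classical
  set ℓ : X → (Θ → ℝ) := fun x θ => P θ x with hℓ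
  have hset : ∀ t : ℝ, {l : Θ → ℝ | ∃ x, T x = t ∧ l = fun θ => P θ x}
      = ℓ '' {x | T x = t} := by
    intro t
    ext l
    constructor
    · rintro ⟨x, hx, rfl⟩; exact ⟨x, hx, rfl⟩
    · rintro ⟨x, hx, rfl⟩; exact ⟨x, hx, rfl⟩
  constructor
  · -- UMVUE → independent
    intro hU
    rw [iSupIndep_def]
    intro t
    rw [Submodule.disjoint_def]
    intro w hw1 hw2
    -- w belongs to the span of ℓ over the fiber of t
    rw [hset, Finsupp.mem_span_image_iff_linearCombination] at hw1
    obtain ⟨l₁, hl₁s, hl₁⟩ := hw1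
    -- the sup of the other subspaces is contained in span of ℓ over the complement
    have hle : (⨆ (s : Set.range T) (_ : s ≠ t),
        Submodule.span ℝ {l : Θ → ℝ | ∃ x, T x = (s : ℝ) ∧ l = fun θ => P θ x})
        ≤ Submodule.span ℝ (ℓ '' {x | T x ≠ (t : ℝ)}) := by
      apply iSup₂_le
      intro s hs
      rw [hset]
      apply Submodule.span_mono
      apply Set.image_mono
      intro x hx
      simp only [Set.mem_setOf_eq] at hx ⊢
      rw [hx]
      exact fun h => hs (Subtype.ext h)
    have hw2' := hle hw2
    rw [Finsupp.mem_span_image_iff_linearCombination] at hw2'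
    obtain ⟨l₂, hl₂s, hl₂⟩ := hw2'
    -- pointwise expressions for the two linear combinations
    have hcomb : ∀ (l : X →₀ ℝ) (θ : Θ),
        (Finsupp.linearCombination ℝ ℓ l) θ = ∑ x, l x * P θ x := by
      intro l θ
      rw [Finsupp.linearCombination_apply, Finsupp.sum_fintype _ _ (by simp)]
      rw [Finset.sum_apply]
      rfl
    set H : X → ℝ := fun x => l₁ x - l₂ x with hHdef
    have hH : ∀ θ, ∑ x, H x * P θ x = 0 := by
      intro θ
      simp only [hHdef, sub_mul]
      rw [Finset.sum_sub_distrib, ← hcomb l₁ θ, ← hcomb l₂ θ, hl₁, hl₂, sub_self]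
    have hz := fiber_zero P T hU H hH (t : ℝ)
    -- on the fiber of t, l₂ vanishes
    have hl₂0 : ∀ x, T x = (t : ℝ) → l₂ x = 0 := by
      intro x hx
      by_contra h
      have := hl₂s (Finsupp.mem_support_iff.mpr h)
      exact this hx
    have hl₁0 : ∀ x, T x ≠ (t : ℝ) → l₁ x = 0 := by
      intro x hx
      by_contra h
      exact hx (hl₁s (Finsupp.mem_support_iff.mpr h))
    funext θ
    have h1 : ∑ x ∈ Finset.univ.filter (fun x => T x = (t : ℝ)), l₁ x * P θ x = 0 := by
      rw [← hz θ]
      apply Finset.sum_congr rfl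
      intro x hx
      rw [Finset.mem_filter] at hx
      simp [hHdef, hl₂0 x hx.2]
    have h2 : ∑ x, l₁ x * P θ x
        = ∑ x ∈ Finset.univ.filter (fun x => T x = (t : ℝ)), l₁ x * P θ x := by
      rw [Finset.sum_filter]
      apply Finset.sum_congr rfl
      intro x _
      by_cases hx : T x = (t : ℝ)
      · rw [if_pos hx]
      · rw [if_neg hx, hl₁0 x hx, zero_mul]
    have := hcomb l₁ θ
    rw [hl₁] at this
    rw [this, h2, h1]
    rfl
  · -- independent → UMVUE
    intro hInd H hH θ
    rw [iSupIndep_def] at hInd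
    -- group the total sum by fibers
    have hfib : ∀ t ∈ Finset.univ.image T,
        ∀ θ', ∑ x ∈ Finset.univ.filter (fun x => T x = t), H x * P θ' x = 0 := by
      intro t ht
      obtain ⟨x₀, _, hx₀⟩ := Finset.mem_image.mp ht
      set t' : Set.range T := ⟨t, ⟨x₀, hx₀⟩⟩ with ht'
      set w : Θ → ℝ := fun θ' => ∑ x ∈ Finset.univ.filter (fun x => T x = t), H x * P θ' x
        with hwdef
      -- in general: fiber sums belong to the corresponding spans
      have hmem : ∀ s : ℝ, (fun θ' => ∑ x ∈ Finset.univ.filter (fun x => T x = s),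
          H x * P θ' x) ∈ Submodule.span ℝ {l : Θ → ℝ | ∃ x, T x = s ∧ l = fun θ => P θ x} := by
        intro s
        have : (fun θ' => ∑ x ∈ Finset.univ.filter (fun x => T x = s), H x * P θ' x)
            = ∑ x ∈ Finset.univ.filter (fun x => T x = s), H x • ℓ x := by
          funext θ'
          rw [Finset.sum_apply]
          rfl
        rw [this]
        apply Submodule.sum_mem
        intro x hx
        rw [Finset.mem_filter] at hx
        exact Submodule.smul_mem _ _ (Submodule.subset_span ⟨x, hx.2, rfl⟩)
      have hw1 : w ∈ Submodule.span ℝ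
          {l : Θ → ℝ | ∃ x, T x = (t' : ℝ) ∧ l = fun θ => P θ x} := hmem t
      -- w is minus the sum of the other fiber sums
      have htot : ∑ s ∈ Finset.univ.image T,
          (fun θ' => ∑ x ∈ Finset.univ.filter (fun x => T x = s), H x * P θ' x)
          = (0 : Θ → ℝ) := by
        funext θ'
        rw [Finset.sum_apply]
        rw [Finset.sum_fiberwise_of_maps_to (s := (Finset.univ : Finset X))
          (t := Finset.univ.image T) (g := T)
          (fun x _ => Finset.mem_image_of_mem T (Finset.mem_univ x))
          (fun x => H x * P θ' x)]
        exact hH θ'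
      have hw2 : w ∈ ⨆ (s : Set.range T) (_ : s ≠ t'),
          Submodule.span ℝ {l : Θ → ℝ | ∃ x, T x = (s : ℝ) ∧ l = fun θ => P θ x} := by
        have hw' : w = -∑ s ∈ (Finset.univ.image T).erase t,
            (fun θ' => ∑ x ∈ Finset.univ.filter (fun x => T x = s), H x * P θ' x) := by
          have := Finset.add_sum_erase _ (fun s => (fun θ' =>
            ∑ x ∈ Finset.univ.filter (fun x => T x = s), H x * P θ' x)) ht
          rw [htot] at this
          rw [eq_neg_iff_add_eq_zero]
          exact this
        rw [hw']
        apply Submodule.neg_mem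
        apply Submodule.sum_mem
        intro s hs
        rw [Finset.mem_erase] at hs
        obtain ⟨x₁, _, hx₁⟩ := Finset.mem_image.mp hs.2
        have : (⟨s, ⟨x₁, hx₁⟩⟩ : Set.range T) ≠ t' := by
          intro h
          exact hs.1 (congrArg Subtype.val h)
        refine Submodule.mem_iSup_of_mem ⟨s, ⟨x₁, hx₁⟩⟩ ?_
        refine Submodule.mem_iSup_of_mem this ?_
        exact hmem s
      have hw0 : w = 0 := (Submodule.disjoint_def.mp (hInd t')) w hw1 hw2
      intro θ'
      have := congrFun hw0 θ'
      simpa [hwdef] using this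
    -- now sum over fibers
    rw [← Finset.sum_fiberwise_of_maps_to (s := (Finset.univ : Finset X))
      (t := Finset.univ.image T) (g := T)
      (fun x _ => Finset.mem_image_of_mem T (Finset.mem_univ x))
      (fun x => T x * H x * P θ x)]
    apply Finset.sum_eq_zero
    intro t ht
    have : ∀ x ∈ Finset.univ.filter (fun x => T x = t),
        T x * H x * P θ x = t * (H x * P θ x) := by
      intro x hx
      rw [Finset.mem_filter] at hx
      rw [hx.2, mul_assoc]
    rw [Finset.sum_congr rfl this, ← Finset.mul_sum, hfib t ht θ, mul_zero]
end

section
/- Let X be a finite set, Θ a set, P : Θ → X → ℝ a family of probability mass functions, and T : X → ℝ a statistic such that the likelihood functions ℓ_x and ℓ_y are proportional whenever T(x) = T(y) (i.e., each span{ℓ_x : T(x) = t} is at most one-dimensional). Then T is a UMVUE if and only if T is complete. -/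
/-- If likelihood functions are proportional whenever the statistic takes equal
values (each `span {ℓ_x : T x = t}` is at most one-dimensional), then `T` is a
UMVUE (covariance characterization) iff `T` is complete. -/
theorem umvue_iff_complete_of_proportional
    {X Θ : Type*} [Fintype X]
    (P : Θ → X → ℝ)
    (hP0 : ∀ θ x, 0 ≤ P θ x)
    (hP1 : ∀ θ, ∑ x, P θ x = 1)
    (T : X → ℝ)
    (hprop : ∀ x y, T x = T y →
      ∃ c : ℝ, (fun θ => P θ x) = c • (fun θ => P θ y) ∨
        (fun θ => P θ y) = c • (fun θ => P θ x)) :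
    (∀ H : X → ℝ, (∀ θ, ∑ x, H x * P θ x = 0) →
        ∀ θ, ∑ x, T x * H x * P θ x = 0)
      ↔ (∀ u : ℝ → ℝ, (∀ θ, ∑ x, u (T x) * P θ x = 0) →
          ∀ θ x, u (T x) * P θ x = 0) := by
  classical
  set V : Finset ℝ := Finset.image T Finset.univ with hV
  have hmem : ∀ x : X, T x ∈ V := fun x => Finset.mem_image_of_mem T (Finset.mem_univ x)
  constructor
  · -- UMVUE → complete
    intro h u hu θ x
    have key : ∀ n : ℕ, ∀ θ', ∑ y, (T y) ^ n * u (T y) * P θ' y = 0 := by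
      intro n
      induction n with
      | zero => intro θ'; simpa using hu θ'
      | succ n ih =>
        intro θ'
        have h2 := h (fun y => (T y) ^ n * u (T y)) ih θ'
        calc ∑ y, (T y) ^ (n + 1) * u (T y) * P θ' y
            = ∑ y, T y * ((T y) ^ n * u (T y)) * P θ' y :=
              Finset.sum_congr rfl fun y _ => by ring
          _ = 0 := h2
    have keyq : ∀ q : Polynomial ℝ, ∑ y, q.eval (T y) * u (T y) * P θ y = 0 := by
      intro q
      have hrw : ∀ y : X, q.eval (T y) * u (T y) * P θ y
          = ∑ i ∈ Finset.range (q.natDegree + 1),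
              q.coeff i * ((T y) ^ i * u (T y) * P θ y) := by
        intro y
        rw [Polynomial.eval_eq_sum_range, Finset.sum_mul, Finset.sum_mul]
        exact Finset.sum_congr rfl fun i _ => by ring
      rw [Finset.sum_congr rfl fun y _ => hrw y, Finset.sum_comm]
      refine Finset.sum_eq_zero fun i _ => ?_
      rw [← Finset.mul_sum, key i θ, mul_zero]
    set f : ℝ → ℝ :=
      fun t => u t * ∑ y ∈ Finset.univ.filter (fun y => T y = t), P θ y with hf
    have heval : ∀ y : X, (Lagrange.interpolate V id f).eval (T y) = f (T y) := fun y =>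
      Lagrange.eval_interpolate_at_node f (Set.injOn_id _) (hmem y)
    have h0' : ∑ y, f (T y) * u (T y) * P θ y = 0 := by
      rw [← keyq (Lagrange.interpolate V id f)]
      exact Finset.sum_congr rfl fun y _ => by rw [heval y]
    have hgroup : ∑ t ∈ V, ∑ y ∈ Finset.univ.filter (fun y => T y = t),
        (f (T y) * u (T y) * P θ y) = ∑ y, f (T y) * u (T y) * P θ y :=
      Finset.sum_fiberwise_of_maps_to (fun y _ => hmem y) _
    have h1 : ∑ t ∈ V, f t * f t = 0 := by
      rw [← h0', ← hgroup]
      refine Finset.sum_congr rfl fun t ht => ?_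
      have hc : ∑ y ∈ Finset.univ.filter (fun y => T y = t), f (T y) * u (T y) * P θ y
          = ∑ y ∈ Finset.univ.filter (fun y => T y = t), f t * u t * P θ y :=
        Finset.sum_congr rfl fun y hy => by rw [(Finset.mem_filter.mp hy).2]
      rw [hc, ← Finset.mul_sum]
      simp only [hf]
      ring
    have hfzero : ∀ t ∈ V, f t = 0 := by
      intro t ht
      have := (Finset.sum_eq_zero_iff_of_nonneg
        (fun t _ => mul_self_nonneg (f t))).mp h1 t ht
      exact (mul_self_eq_zero).mp this
    have hfx : f (T x) = 0 := hfzero _ (hmem x)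
    rcases mul_eq_zero.mp hfx with h2 | h2
    · rw [h2, zero_mul]
    · have hx : P θ x = 0 :=
        (Finset.sum_eq_zero_iff_of_nonneg (fun y _ => hP0 θ y)).mp h2 x
          (Finset.mem_filter.mpr ⟨Finset.mem_univ x, rfl⟩)
      rw [hx, mul_zero]
  · -- complete → UMVUE
    intro hcomp H hH θ
    -- proportionality with a nonnegative constant against a nonzero likelihood
    have hprop' : ∀ x y : X, T x = T y → (fun θ' => P θ' y) ≠ 0 →
        ∃ c : ℝ, 0 ≤ c ∧ ∀ θ', P θ' x = c * P θ' y := by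
      intro x y hxy hy
      obtain ⟨c, hc | hc⟩ := hprop x y hxy
      · have hc' : ∀ θ', P θ' x = c * P θ' y := fun θ' => congrFun hc θ'
        refine ⟨c, ?_, hc'⟩
        by_contra hneg
        push_neg at hneg
        apply hy
        funext θ'
        have h1 := hc' θ'
        have h2 := hP0 θ' x
        have h3 := hP0 θ' y
        have : P θ' y ≤ 0 := by nlinarith
        simpa using le_antisymm this h3
      · have hc' : ∀ θ', P θ' y = c * P θ' x := fun θ' => congrFun hc θ'
        have hcne : c ≠ 0 := by
          rintro rfl
          apply hy
          funext θ'
          simpa using hc' θ'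
        have hcpos : 0 < c := by
          rcases (hcne.lt_or_gt) with h | h
          · exfalso
            apply hy
            funext θ'
            have h1 := hc' θ'
            have h2 := hP0 θ' x
            have h3 := hP0 θ' y
            have : P θ' y ≤ 0 := by nlinarith
            simpa using le_antisymm this h3
          · exact h
        refine ⟨c⁻¹, (inv_nonneg).mpr hcpos.le, fun θ' => ?_⟩
        rw [hc' θ', inv_mul_cancel_left₀ hcne]
    -- on each fiber, H averages to a constant against P
    have hex : ∀ t : ℝ, ∃ v : ℝ, ∀ θ',
        ∑ x ∈ Finset.univ.filter (fun x => T x = t), H x * P θ' x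
          = v * ∑ x ∈ Finset.univ.filter (fun x => T x = t), P θ' x := by
      intro t
      by_cases hnz : ∃ x₀ ∈ Finset.univ.filter (fun x => T x = t),
          (fun θ' => P θ' x₀) ≠ 0
      · obtain ⟨x₀, hx₀mem, hx₀⟩ := hnz
        have hTx₀ : T x₀ = t := (Finset.mem_filter.mp hx₀mem).2
        have hall : ∀ x ∈ Finset.univ.filter (fun x => T x = t),
            ∃ c : ℝ, 0 ≤ c ∧ ∀ θ', P θ' x = c * P θ' x₀ := fun x hx =>
          hprop' x x₀ ((Finset.mem_filter.mp hx).2.trans hTx₀.symm) hx₀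
        choose! c hc0 hcP using hall
        have hcx₀ : c x₀ = 1 := by
          obtain ⟨θ₀, hθ₀⟩ := Function.ne_iff.mp hx₀
          have hθ₀' : P θ₀ x₀ ≠ 0 := by simpa using hθ₀
          have h1 := hcP x₀ hx₀mem θ₀
          have h2 : c x₀ * P θ₀ x₀ = 1 * P θ₀ x₀ := by rw [one_mul, ← h1]
          exact mul_right_cancel₀ hθ₀' h2
        have hsum_pos : (0 : ℝ) < ∑ x ∈ Finset.univ.filter (fun x => T x = t), c x := by
          have h1 : c x₀ ≤ ∑ x ∈ Finset.univ.filter (fun x => T x = t), c x :=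
            Finset.single_le_sum (fun x hx => hc0 x hx) hx₀mem
          rw [hcx₀] at h1
          linarith
        refine ⟨(∑ x ∈ Finset.univ.filter (fun x => T x = t), H x * c x)
          / (∑ x ∈ Finset.univ.filter (fun x => T x = t), c x), fun θ' => ?_⟩
        have hL : ∑ x ∈ Finset.univ.filter (fun x => T x = t), H x * P θ' x
            = (∑ x ∈ Finset.univ.filter (fun x => T x = t), H x * c x) * P θ' x₀ := by
          rw [Finset.sum_mul]
          refine Finset.sum_congr rfl fun x hx => ?_
          rw [hcP x hx θ']; ring
        have hR : ∑ x ∈ Finset.univ.filter (fun x => T x = t), P θ' x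
            = (∑ x ∈ Finset.univ.filter (fun x => T x = t), c x) * P θ' x₀ := by
          rw [Finset.sum_mul]
          exact Finset.sum_congr rfl fun x hx => hcP x hx θ'
        rw [hL, hR]
        field_simp
      · push_neg at hnz
        refine ⟨0, fun θ' => ?_⟩
        rw [zero_mul]
        refine Finset.sum_eq_zero fun x hx => ?_
        have h0 : P θ' x = 0 := by simpa using congrFun (hnz x hx) θ'
        rw [h0, mul_zero]
    choose u hu using hex
    have hu0 : ∀ θ', ∑ x, u (T x) * P θ' x = 0 := by
      intro θ'
      have hg : ∑ t ∈ V, ∑ x ∈ Finset.univ.filter (fun x => T x = t), u (T x) * P θ' x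
          = ∑ x, u (T x) * P θ' x :=
        Finset.sum_fiberwise_of_maps_to (fun x _ => hmem x) _
      rw [← hg]
      have hc : ∀ t ∈ V,
          ∑ x ∈ Finset.univ.filter (fun x => T x = t), u (T x) * P θ' x
            = ∑ x ∈ Finset.univ.filter (fun x => T x = t), H x * P θ' x := by
        intro t ht
        calc ∑ x ∈ Finset.univ.filter (fun x => T x = t), u (T x) * P θ' x
            = ∑ x ∈ Finset.univ.filter (fun x => T x = t), u t * P θ' x :=
              Finset.sum_congr rfl fun x hx => by rw [(Finset.mem_filter.mp hx).2]
          _ = u t * ∑ x ∈ Finset.univ.filter (fun x => T x = t), P θ' x :=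
              (Finset.mul_sum _ _ _).symm
          _ = _ := (hu t θ').symm
      rw [Finset.sum_congr rfl hc,
        Finset.sum_fiberwise_of_maps_to (fun x _ => hmem x) (fun x => H x * P θ' x)]
      exact hH θ'
    have hz := hcomp u hu0
    have hfib : ∀ t, ∑ x ∈ Finset.univ.filter (fun x => T x = t), H x * P θ x = 0 := by
      intro t
      rw [hu t θ, Finset.mul_sum]
      refine Finset.sum_eq_zero fun x hx => ?_
      rw [← (Finset.mem_filter.mp hx).2]
      exact hz θ x
    have hsplit : ∑ x, T x * H x * P θ x
        = ∑ t ∈ V, ∑ x ∈ Finset.univ.filter (fun x => T x = t), T x * H x * P θ x :=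
      (Finset.sum_fiberwise_of_maps_to (fun x _ => hmem x) _).symm
    rw [hsplit]
    refine Finset.sum_eq_zero fun t ht => ?_
    calc ∑ x ∈ Finset.univ.filter (fun x => T x = t), T x * H x * P θ x
        = ∑ x ∈ Finset.univ.filter (fun x => T x = t), t * (H x * P θ x) :=
          Finset.sum_congr rfl fun x hx => by
            rw [(Finset.mem_filter.mp hx).2]; ring
      _ = t * ∑ x ∈ Finset.univ.filter (fun x => T x = t), H x * P θ x :=
          (Finset.mul_sum _ _ _).symm
      _ = 0 := by rw [hfib t, mul_zero]
end

section
/- In the Bernoulli model X = {0,1}ⁿ, Θ = (0,1), P θ x = θ^{T(x)}(1-θ)^{n-T(x)} with T(x) = Σ xᵢ, a statistic S : X → ℝ is a UMVUE if and only if S factors through T, i.e., there exists u : ℝ → ℝ with S = u ∘ T. -/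
/-!
Write `E_θ f = ∑ₓ f x θ^{T x} (1-θ)^{n - T x}`. Grouping by the value of `T`,
`E_θ f = ∑ₖ (∑_{T x = k} f x) θ^k (1-θ)^{n-k}`, and the substitution `θ = t / (1 + t)` turns
this into a polynomial in `t > 0`; so `E_θ H = 0` on `(0,1)` forces every fibre sum of `H` to
vanish (completeness of `T`). Hence `E_θ[(u ∘ T) H] = ∑ₖ u k (∑_{T x = k} H x) θ^k (1-θ)^{n-k} = 0`.
Conversely, if `T x = T y` then `H = 𝟙_x - 𝟙_y` has `E_θ H = 0`, while
`E_θ[S H] = (S x - S y) θ^{T x} (1-θ)^{n - T x}`, so `S x = S y`.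
-/

open Finset Polynomial

theorem div_one_add_pow_mul_one_sub_pow_mul_one_add_pow {t : ℝ} (ht : 1 + t ≠ 0) {k n : ℕ}
    (hk : k ≤ n) : (t / (1 + t)) ^ k * (1 - t / (1 + t)) ^ (n - k) * (1 + t) ^ n = t ^ k := by
  have h₁ : 1 - t / (1 + t) = 1 / (1 + t) := by field_simp; ring
  rw [h₁, div_pow, div_pow, one_pow, ← Nat.add_sub_cancel' hk, pow_add, Nat.add_sub_cancel_left]
  field_simp

theorem eq_zero_of_sum_mul_pow_mul_one_sub_pow_eq_zero {n : ℕ} {c : ℕ → ℝ}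
    (h : ∀ θ ∈ Set.Ioo (0 : ℝ) 1, ∑ k ∈ range (n + 1), c k * (θ ^ k * (1 - θ) ^ (n - k)) = 0)
    {k : ℕ} (hk : k ≤ n) : c k = 0 := by
  have hroot : ∀ t ∈ Set.Ioi (0 : ℝ), (∑ j ∈ range (n + 1), C (c j) * X ^ j).IsRoot t := by
    intro t (ht : 0 < t)
    have hθ : t / (1 + t) ∈ Set.Ioo (0 : ℝ) 1 :=
      ⟨by positivity, (div_lt_one (by positivity)).2 (by linarith)⟩
    have h₁ : 1 + t ≠ 0 := by positivity
    rw [IsRoot.def]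
    calc (∑ j ∈ range (n + 1), C (c j) * X ^ j).eval t
        = ∑ j ∈ range (n + 1), c j * ((t / (1 + t)) ^ j * (1 - t / (1 + t)) ^ (n - j)) *
            (1 + t) ^ n := by
          simp only [eval_finsetSum, eval_mul, eval_C, eval_pow, eval_X]
          refine sum_congr rfl fun j hj => ?_
          rw [mul_assoc, div_one_add_pow_mul_one_sub_pow_mul_one_add_pow h₁
            (Nat.lt_succ_iff.1 (mem_range.1 hj))]
      _ = 0 := by rw [← sum_mul, h _ hθ, zero_mul]
  have hp := eq_zero_of_infinite_isRoot _ ((Set.Ioi_infinite 0).mono hroot)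
  simpa [finsetSum_coeff, coeff_C_mul, coeff_X_pow, Nat.lt_succ_iff.2 hk] using
    congrArg (coeff · k) hp

section Model

variable {α : Type*} [Fintype α]

def modelMean (n : ℕ) (T : α → ℕ) (θ : ℝ) (f : α → ℝ) : ℝ :=
  ∑ x, f x * (θ ^ T x * (1 - θ) ^ (n - T x))

variable {n : ℕ} {T : α → ℕ}

theorem modelMean_eq_sum_range (hT : ∀ x, T x ≤ n) (θ : ℝ) (f : α → ℝ) :
    modelMean n T θ f =
      ∑ k ∈ range (n + 1), (∑ x with T x = k, f x) * (θ ^ k * (1 - θ) ^ (n - k)) := by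
  rw [modelMean, ← sum_fiberwise_of_maps_to (g := T)
    fun x _ => mem_range.2 (Nat.lt_succ_of_le (hT x))]
  refine sum_congr rfl fun k _ => ?_
  rw [sum_mul]
  exact sum_congr rfl fun x hx => by rw [(mem_filter.1 hx).2]

theorem sum_fiber_eq_zero_of_modelMean_eq_zero (hT : ∀ x, T x ≤ n) {H : α → ℝ}
    (hH : ∀ θ ∈ Set.Ioo (0 : ℝ) 1, modelMean n T θ H = 0) {k : ℕ} (hk : k ≤ n) :
    ∑ x with T x = k, H x = 0 :=
  eq_zero_of_sum_mul_pow_mul_one_sub_pow_eq_zero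
    (c := fun k => ∑ x with T x = k, H x)
    (fun θ hθ => (modelMean_eq_sum_range hT θ H).symm.trans (hH θ hθ)) hk

theorem modelMean_comp_mul_eq_zero (hT : ∀ x, T x ≤ n) {H : α → ℝ}
    (hH : ∀ θ ∈ Set.Ioo (0 : ℝ) 1, modelMean n T θ H = 0) (u : ℕ → ℝ) (θ : ℝ) :
    modelMean n T θ ((u ∘ T) * H) = 0 := by
  rw [modelMean_eq_sum_range hT]
  refine sum_eq_zero fun k hk => ?_
  have hfiber : ∑ x with T x = k, ((u ∘ T) * H) x = u k * ∑ x with T x = k, H x := by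
    rw [mul_sum]
    exact sum_congr rfl fun x hx => by
      rw [Pi.mul_apply, Function.comp_apply, (mem_filter.1 hx).2]
  rw [hfiber, sum_fiber_eq_zero_of_modelMean_eq_zero hT hH (Nat.lt_succ_iff.1 (mem_range.1 hk)),
    mul_zero, zero_mul]

variable [DecidableEq α]

theorem modelMean_mul_single_sub_single (θ : ℝ) (g : α → ℝ) {x y : α} (hxy : T x = T y) :
    modelMean n T θ (g * (Pi.single x 1 - Pi.single y 1)) =
      (g x - g y) * (θ ^ T x * (1 - θ) ^ (n - T x)) := by
  simp only [modelMean, Pi.mul_apply, Pi.sub_apply, Pi.single_apply, mul_sub, mul_ite, mul_one,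
    mul_zero, sub_mul, ite_mul, zero_mul, sum_sub_distrib, sum_ite_eq', mem_univ, if_true, hxy]

theorem factorsThrough_of_forall_modelMean_mul_eq_zero {S : α → ℝ}
    (hS : ∀ H : α → ℝ, (∀ θ ∈ Set.Ioo (0 : ℝ) 1, modelMean n T θ H = 0) →
      ∀ θ ∈ Set.Ioo (0 : ℝ) 1, modelMean n T θ (S * H) = 0) :
    S.FactorsThrough T := by
  intro x y hxy
  have hH : ∀ θ ∈ Set.Ioo (0 : ℝ) 1, modelMean n T θ (Pi.single x 1 - Pi.single y 1) = 0 := by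
    intro θ _
    simpa using modelMean_mul_single_sub_single (n := n) θ 1 hxy
  have h := hS _ hH (1 / 2) ⟨by norm_num, by norm_num⟩
  rw [modelMean_mul_single_sub_single _ _ hxy] at h
  have hP : (1 / 2 : ℝ) ^ T x * (1 - 1 / 2) ^ (n - T x) ≠ 0 := by positivity
  exact sub_eq_zero.1 ((mul_eq_zero.1 h).resolve_right hP)

theorem forall_modelMean_mul_eq_zero_iff_factorsThrough (hT : ∀ x, T x ≤ n) {S : α → ℝ} :
    (∀ H : α → ℝ, (∀ θ ∈ Set.Ioo (0 : ℝ) 1, modelMean n T θ H = 0) →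
      ∀ θ ∈ Set.Ioo (0 : ℝ) 1, modelMean n T θ (S * H) = 0) ↔ S.FactorsThrough T := by
  refine ⟨factorsThrough_of_forall_modelMean_mul_eq_zero, fun hS H hH θ _ => ?_⟩
  obtain ⟨u, rfl⟩ := (Function.factorsThrough_iff S).1 hS
  exact modelMean_comp_mul_eq_zero hT hH u θ

end Model

/-- In the Bernoulli model `X = {0,1}ⁿ`, `Θ = (0,1)`,
`P θ x = θ^(T x) (1-θ)^(n - T x)` with `T x = ∑ xᵢ`, a statistic `S` is a UMVUE
(covariance characterization) iff `S` factors through `T`. -/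
theorem bernoulli_umvue_iff_factors (n : ℕ) (S : (Fin n → Bool) → ℝ) :
    (∀ H : (Fin n → Bool) → ℝ,
        (∀ θ ∈ Set.Ioo (0 : ℝ) 1,
          ∑ x, H x * (θ ^ (∑ i, if x i then 1 else 0 : ℕ) *
            (1 - θ) ^ (n - (∑ i, if x i then 1 else 0 : ℕ))) = 0) →
        ∀ θ ∈ Set.Ioo (0 : ℝ) 1,
          ∑ x, S x * H x * (θ ^ (∑ i, if x i then 1 else 0 : ℕ) *
            (1 - θ) ^ (n - (∑ i, if x i then 1 else 0 : ℕ))) = 0)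
      ↔ ∃ u : ℝ → ℝ, S = fun x => u ((∑ i, if x i then 1 else 0 : ℕ) : ℝ) := by
  have hT (x : Fin n → Bool) : (∑ i, if x i then 1 else 0 : ℕ) ≤ n := by
    rw [sum_boole]
    simpa using card_filter_le univ fun i => x i = true
  refine (forall_modelMean_mul_eq_zero_iff_factorsThrough hT).trans ?_
  refine ⟨fun h => (Function.factorsThrough_iff S).1 fun _ _ hxy => h (Nat.cast_injective hxy),
    ?_⟩
  rintro ⟨u, rfl⟩ x y hxy
  exact congrArg (fun k : ℕ => u k) hxy
end

section
/- Suppose on a finite sample space X with family P : Θ → X → ℝ of probability mass functions, a statistic W is sufficient and complete, and T is a UMVUE of some function b. Then T = E_θ(T | W) except on a null set; consequently T = u ∘ W off a null set for some u : ℝ → ℝ. -/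
lemma sum_fiber_decomp {X : Type*} [Fintype X] (W : X → ℝ) (f : X → ℝ) :
    ∑ x, f x = ∑ v ∈ Finset.univ.image W,
      ∑ x ∈ Finset.univ.filter (fun x => W x = v), f x := by
  rw [Finset.sum_fiberwise_of_maps_to]
  intro x _
  exact Finset.mem_image_of_mem W (Finset.mem_univ x)

/-- If `W` is a sufficient and complete statistic and `T` is a UMVUE of some
function `b`, then `T` coincides off the null set with its Rao–Blackwellization
`E(T|W)`; in particular `T = u ∘ W` off the null set for some `u : ℝ → ℝ`. -/
theorem umvue_eq_condexp_of_sufficient_complete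
    {X Θ : Type*} [Fintype X]
    (P : Θ → X → ℝ)
    (hP0 : ∀ θ x, 0 ≤ P θ x)
    (hP1 : ∀ θ, ∑ x, P θ x = 1)
    (W : X → ℝ)
    -- `W` is sufficient: every statistic `S` has a version `S_W` of the
    -- conditional expectation `E_θ(S|W)` not depending on `θ`.
    (hsuff : ∀ S : X → ℝ, ∃ S_W : X → ℝ, (∃ g : ℝ → ℝ, S_W = g ∘ W) ∧
      ∀ θ, ∀ v : ℝ,
        ∑ x ∈ Finset.univ.filter (fun x => W x = v), S x * P θ x =
        ∑ x ∈ Finset.univ.filter (fun x => W x = v), S_W x * P θ x)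
    -- `W` is complete.
    (hcompl : ∀ u : ℝ → ℝ, (∀ θ, ∑ x, u (W x) * P θ x = 0) →
      ∀ θ x, u (W x) * P θ x = 0)
    (b : Θ → ℝ) (T : X → ℝ)
    -- `T` is a UMVUE of `b`.
    (hTb : ∀ θ, ∑ x, T x * P θ x = b θ)
    (hmin : ∀ S : X → ℝ, (∀ θ, ∑ x, S x * P θ x = b θ) →
      ∀ θ, ∑ x, (T x) ^ 2 * P θ x ≤ ∑ x, (S x) ^ 2 * P θ x) :
    ∃ T_W : X → ℝ, (∃ u : ℝ → ℝ, T_W = u ∘ W) ∧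
      (∀ θ, ∀ v : ℝ,
        ∑ x ∈ Finset.univ.filter (fun x => W x = v), T x * P θ x =
        ∑ x ∈ Finset.univ.filter (fun x => W x = v), T_W x * P θ x) ∧
      ∀ x, (∃ θ, P θ x ≠ 0) → T x = T_W x := by
  obtain ⟨T_W, ⟨g, hg⟩, hce⟩ := hsuff T
  refine ⟨T_W, ⟨g, hg⟩, hce, ?_⟩
  -- T_W is unbiased
  have hTWb : ∀ θ, ∑ x, T_W x * P θ x = b θ := by
    intro θ
    rw [sum_fiber_decomp W, ← hTb θ, sum_fiber_decomp W (fun x => T x * P θ x)]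
    exact Finset.sum_congr rfl fun v _ => (hce θ v).symm
  -- E(T·T_W) = E(T_W²)
  have hcross : ∀ θ, ∑ x, T x * T_W x * P θ x = ∑ x, (T_W x) ^ 2 * P θ x := by
    intro θ
    rw [sum_fiber_decomp W (fun x => T x * T_W x * P θ x),
        sum_fiber_decomp W (fun x => (T_W x) ^ 2 * P θ x)]
    refine Finset.sum_congr rfl fun v _ => ?_
    have h1 : ∑ x ∈ Finset.univ.filter (fun x => W x = v), T x * T_W x * P θ x
        = g v * ∑ x ∈ Finset.univ.filter (fun x => W x = v), T x * P θ x := by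
      rw [Finset.mul_sum]
      refine Finset.sum_congr rfl fun x hx => ?_
      have hW : W x = v := (Finset.mem_filter.mp hx).2
      simp [hg, hW]; ring
    have h2 : ∑ x ∈ Finset.univ.filter (fun x => W x = v), (T_W x) ^ 2 * P θ x
        = g v * ∑ x ∈ Finset.univ.filter (fun x => W x = v), T_W x * P θ x := by
      rw [Finset.mul_sum]
      refine Finset.sum_congr rfl fun x hx => ?_
      have hW : W x = v := (Finset.mem_filter.mp hx).2
      simp [hg, hW]; ring
    rw [h1, h2, hce θ v]
  -- variance comparison
  intro x ⟨θ, hθ⟩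
  have key : ∑ y, (T y - T_W y) ^ 2 * P θ y ≤ 0 := by
    have expand : ∑ y, (T y - T_W y) ^ 2 * P θ y
        = ∑ y, (T y) ^ 2 * P θ y - 2 * ∑ y, T y * T_W y * P θ y
          + ∑ y, (T_W y) ^ 2 * P θ y := by
      rw [Finset.mul_sum, ← Finset.sum_sub_distrib, ← Finset.sum_add_distrib]
      refine Finset.sum_congr rfl fun y _ => by ring
    have hle := hmin T_W hTWb θ
    rw [expand, hcross θ]
    linarith
  have nonneg : ∀ y ∈ Finset.univ, 0 ≤ (T y - T_W y) ^ 2 * P θ y :=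
    fun y _ => mul_nonneg (sq_nonneg _) (hP0 θ y)
  have hzero : ∑ y, (T y - T_W y) ^ 2 * P θ y = 0 :=
    le_antisymm key (Finset.sum_nonneg nonneg)
  have := (Finset.sum_eq_zero_iff_of_nonneg nonneg).mp hzero x (Finset.mem_univ x)
  have hsq : (T x - T_W x) ^ 2 = 0 := by
    rcases mul_eq_zero.mp this with h | h
    · exact h
    · exact absurd h hθ
  have := pow_eq_zero_iff (n := 2) (by norm_num) |>.mp hsq
  linarith
end
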